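/- Let a₀, b₀, a₁ be a V-path in which a₀ = S is a face sequence of type 7, and write a₁ = S′. Then exactly one of the following holds: (i) S′ is of type 1, 2 or 8 and S′ has a 0 at the position of the rightmost ∗ of S; (ii) S′ is of type 2, 3, 4, 8 or 10 and the rightmost ∗ of S′ occupies the same position as the rightmost ∗ of S; or (iii) S′ is of type 6 and S′ has a 1 at the position of the rightmost ∗ of S. -/

import Mathlib

set_option linter.unusedVariables false

/-- The alphabet `{0, 1, ∗}` for face sequences. -/
inductive Letter : Type
  | zero
  | one
  | star
  deriving DecidableEq

/-- A sequence of length `n` over the alphabet `{0, 1, ∗}`. -/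
abbrev FSeq (n : ℕ) := Fin n → Letter

/-- `S(1)`, the number of `1`'s in `S`. -/
def count1 {n : ℕ} (S : FSeq n) : ℕ := (Finset.univ.filter fun i => S i = Letter.one).card

/-- `S(0)`, the number of `0`'s in `S`. -/
def count0 {n : ℕ} (S : FSeq n) : ℕ := (Finset.univ.filter fun i => S i = Letter.zero).card

/-- The number of `∗`'s in `S`. -/
def countStar {n : ℕ} (S : FSeq n) : ℕ := (Finset.univ.filter fun i => S i = Letter.star).card

/-- A face sequence: either no `∗` and exactly `k` ones, or at most `k-1` ones and
(#ones) + (#stars) ≥ `k+1`. -/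
def FaceSeq {n : ℕ} (k : ℕ) (S : FSeq n) : Prop :=
  (countStar S = 0 ∧ count1 S = k) ∨ (count1 S + 1 ≤ k ∧ k + 1 ≤ count1 S + countStar S)

/-- `v₀`, the sequence of `k` ones followed by `n - k` zeros. -/
def v0seq (n k : ℕ) : FSeq n := fun i => if (i : ℕ) < k then Letter.one else Letter.zero

/-- `S` contains at least one `∗`. -/
def hasStar {n : ℕ} (S : FSeq n) : Prop := ∃ i, S i = Letter.star

/-- There is a `1` to the right of the rightmost `∗` (in particular `S` contains a `∗`). -/
def OneRight {n : ℕ} (S : FSeq n) : Prop :=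
  hasStar S ∧ ∃ i, S i = Letter.one ∧ ∀ j, i < j → S j ≠ Letter.star

/-- There is no `1` to the right of the rightmost `∗` (and `S` contains a `∗`). -/
def NoOneRight {n : ℕ} (S : FSeq n) : Prop :=
  hasStar S ∧ ∀ i, S i = Letter.one → ∃ j, i < j ∧ S j = Letter.star

/-- There is a `0` to the left of the leftmost `∗` (in particular `S` contains a `∗`). -/
def ZeroLeft {n : ℕ} (S : FSeq n) : Prop :=
  hasStar S ∧ ∃ i, S i = Letter.zero ∧ ∀ j, j < i → S j ≠ Letter.star

/-- There is no `0` to the left of the leftmost `∗` (and `S` contains a `∗`). -/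
def NoZeroLeft {n : ℕ} (S : FSeq n) : Prop :=
  hasStar S ∧ ∀ i, S i = Letter.zero → ∃ j, j < i ∧ S j = Letter.star

/-- `i` is the position of the rightmost `1` of `S`. -/
def IsRightmostOne {n : ℕ} (S : FSeq n) (i : Fin n) : Prop :=
  S i = Letter.one ∧ ∀ j, i < j → S j ≠ Letter.one

/-- `i` is the position of the rightmost `∗` of `S`. -/
def IsRightmostStar {n : ℕ} (S : FSeq n) (i : Fin n) : Prop :=
  S i = Letter.star ∧ ∀ j, i < j → S j ≠ Letter.star

/-- `i` is the position of the leftmost `0` of `S`. -/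
def IsLeftmostZero {n : ℕ} (S : FSeq n) (i : Fin n) : Prop :=
  S i = Letter.zero ∧ ∀ j, j < i → S j ≠ Letter.zero

/-- `i` is the position of the leftmost `∗` of `S`. -/
def IsLeftmostStar {n : ℕ} (S : FSeq n) (i : Fin n) : Prop :=
  S i = Letter.star ∧ ∀ j, j < i → S j ≠ Letter.star

/-- Condition of rule (1), subcondition (a). -/
def Cond1a {n : ℕ} (k m0 m1 : ℕ) (S : FSeq n) : Prop :=
  count1 S + 1 ≤ k ∧ OneRight S ∧ count1 S ≠ m1

/-- Condition of rule (1), subcondition (b). -/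
def Cond1b {n : ℕ} (k m0 m1 : ℕ) (S : FSeq n) : Prop :=
  count1 S + 1 ≤ k ∧ OneRight S ∧ count1 S = m1 ∧ m0 < count0 S

/-- Condition of rule (1), subcondition (c): no `0` to the left of the leftmost `∗`. -/
def Cond1c {n : ℕ} (k m0 m1 : ℕ) (S : FSeq n) : Prop :=
  count1 S + 1 ≤ k ∧ OneRight S ∧ count1 S = m1 ∧ count0 S = m0 ∧ NoZeroLeft S

/-- Condition of rule (2), subcondition (a): here `count1 S + 1 ≠ m1` encodes `S(1) ≠ m₁ - 1`. -/
def Cond2a {n : ℕ} (k m0 m1 : ℕ) (S : FSeq n) : Prop :=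
  count1 S + 2 ≤ k ∧ NoOneRight S ∧ count1 S + 1 ≠ m1

/-- Condition of rule (2), subcondition (b). -/
def Cond2b {n : ℕ} (k m0 m1 : ℕ) (S : FSeq n) : Prop :=
  count1 S + 2 ≤ k ∧ NoOneRight S ∧ count1 S + 1 = m1 ∧ m0 < count0 S

/-- Condition of rule (2), subcondition (c). -/
def Cond2c {n : ℕ} (k m0 m1 : ℕ) (S : FSeq n) : Prop :=
  count1 S + 2 ≤ k ∧ NoOneRight S ∧ count1 S + 1 = m1 ∧ count0 S = m0 ∧ NoZeroLeft S

/-- `S` is of type 1 (satisfies the condition of rule (1)). -/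
def Type1 {n : ℕ} (k m0 m1 : ℕ) (S : FSeq n) : Prop :=
  Cond1a k m0 m1 S ∨ Cond1b k m0 m1 S ∨ Cond1c k m0 m1 S

/-- `S` is of type 2 (satisfies the condition of rule (2)). -/
def Type2 {n : ℕ} (k m0 m1 : ℕ) (S : FSeq n) : Prop :=
  Cond2a k m0 m1 S ∨ Cond2b k m0 m1 S ∨ Cond2c k m0 m1 S

/-- `S` is of type 3: `S(1) = k-1`, `S(0) ≤ n-k-1`, no `1` right of the rightmost `∗`,
a `0` left of the leftmost `∗`. -/
def Type3 {n : ℕ} (k : ℕ) (S : FSeq n) : Prop :=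
  count1 S + 1 = k ∧ count0 S + k + 1 ≤ n ∧ NoOneRight S ∧ ZeroLeft S

/-- `S` is of type 4: `S(1) = k-1`, `S(0) ≤ n-k-2`, no `1` right of the rightmost `∗`,
no `0` left of the leftmost `∗`. -/
def Type4 {n : ℕ} (k : ℕ) (S : FSeq n) : Prop :=
  count1 S + 1 = k ∧ count0 S + k + 2 ≤ n ∧ NoOneRight S ∧ NoZeroLeft S

/-- `S` is of type 5: `S(1) = m₁`, `S(0) ≤ m₀`, a `1` right of the rightmost `∗`,
a `0` left of the leftmost `∗`. -/
def Type5 {n : ℕ} (m0 m1 : ℕ) (S : FSeq n) : Prop :=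
  count1 S = m1 ∧ count0 S ≤ m0 ∧ OneRight S ∧ ZeroLeft S

/-- `S` is of type 6: `S(1) = m₁`, `S(0) < m₀`, a `1` right of the rightmost `∗`,
no `0` left of the leftmost `∗`. -/
def Type6 {n : ℕ} (m0 m1 : ℕ) (S : FSeq n) : Prop :=
  count1 S = m1 ∧ count0 S < m0 ∧ OneRight S ∧ NoZeroLeft S

/-- `S` is of type 7: `S(1) = m₁-1`, `S(0) ≤ m₀`, no `1` right of the rightmost `∗`,
a `0` left of the leftmost `∗`. -/
def Type7 {n : ℕ} (m0 m1 : ℕ) (S : FSeq n) : Prop :=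
  count1 S + 1 = m1 ∧ count0 S ≤ m0 ∧ NoOneRight S ∧ ZeroLeft S

/-- `S` is of type 8: `S(1) = m₁-1`, `S(0) < m₀`, no `1` right of the rightmost `∗`,
no `0` left of the leftmost `∗`. -/
def Type8 {n : ℕ} (m0 m1 : ℕ) (S : FSeq n) : Prop :=
  count1 S + 1 = m1 ∧ count0 S < m0 ∧ NoOneRight S ∧ NoZeroLeft S

/-- `S` is of type 9: `S(1) = k`, `S(0) = n-k`, and `S ≠ v₀`. -/
def Type9 {n : ℕ} (k : ℕ) (S : FSeq n) : Prop :=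
  count1 S = k ∧ count0 S + k = n ∧ S ≠ v0seq n k

/-- `S` is of type 10: `S(1) = k-1`, `S(0) = n-k-1`, no `1` right of the rightmost `∗`,
no `0` left of the leftmost `∗`. -/
def Type10 {n : ℕ} (k : ℕ) (S : FSeq n) : Prop :=
  count1 S + 1 = k ∧ count0 S + k + 1 = n ∧ NoOneRight S ∧ NoZeroLeft S

/-- `S` is of type `i` for `1 ≤ i ≤ 10` (and of no type otherwise). -/
def OfType {n : ℕ} (k m0 m1 : ℕ) (i : ℕ) (S : FSeq n) : Prop :=
  match i with
  | 1 => Type1 k m0 m1 S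
  | 2 => Type2 k m0 m1 S
  | 3 => Type3 k S
  | 4 => Type4 k S
  | 5 => Type5 m0 m1 S
  | 6 => Type6 m0 m1 S
  | 7 => Type7 m0 m1 S
  | 8 => Type8 m0 m1 S
  | 9 => Type9 k S
  | 10 => Type10 k S
  | _ => False

/-- The replacement of rule (1): replace the rightmost `1` with `∗`. -/
def Apply1 {n : ℕ} (S S' : FSeq n) : Prop :=
  ∃ i, IsRightmostOne S i ∧ S' = Function.update S i Letter.star

/-- The replacement of rule (2): replace the rightmost `∗` with `1`. -/
def Apply2 {n : ℕ} (S S' : FSeq n) : Prop :=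
  ∃ i, IsRightmostStar S i ∧ S' = Function.update S i Letter.one

/-- The replacement of rules (3), (5) and (7): replace the leftmost `0` with `∗`. -/
def Apply3 {n : ℕ} (S S' : FSeq n) : Prop :=
  ∃ i, IsLeftmostZero S i ∧ S' = Function.update S i Letter.star

/-- The replacement of rules (4), (6) and (8): replace the leftmost `∗` with `0`. -/
def Apply4 {n : ℕ} (S S' : FSeq n) : Prop :=
  ∃ i, IsLeftmostStar S i ∧ S' = Function.update S i Letter.zero

/-- The replacement of rule (9): replace the leftmost `0` and the rightmost `1` each with `∗`. -/
def Apply9 {n : ℕ} (S S' : FSeq n) : Prop :=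
  ∃ i j, IsLeftmostZero S i ∧ IsRightmostOne S j ∧
    S' = Function.update (Function.update S i Letter.star) j Letter.star

/-- The replacement of rule (10): replace the leftmost `∗` with `0` and the other `∗` with `1`. -/
def Apply10 {n : ℕ} (S S' : FSeq n) : Prop :=
  ∃ i j, IsLeftmostStar S i ∧ IsRightmostStar S j ∧ i ≠ j ∧
    S' = Function.update (Function.update S i Letter.zero) j Letter.one

/-- The matching `V` on face sequences: a face sequence `S` of type 1, 3, 5, 7 or 9 is
matched with the result `S'` of applying the corresponding rule to it. -/
def Vmatch {n : ℕ} (k m0 m1 : ℕ) (S S' : FSeq n) : Prop :=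
  FaceSeq k S ∧
    ((Type1 k m0 m1 S ∧ Apply1 S S') ∨
     (Type3 k S ∧ Apply3 S S') ∨
     (Type5 m0 m1 S ∧ Apply3 S S') ∨
     (Type7 m0 m1 S ∧ Apply3 S S') ∨
     (Type9 k S ∧ Apply9 S S'))

/-- The vertex set of a face sequence `S`: the vertex sequences (0/1-sequences with
exactly `k` ones) agreeing with `S` wherever `S` is not `∗`. -/
def VertexSet {n : ℕ} (k : ℕ) (S : FSeq n) : Set (FSeq n) :=
  {v | (∀ i, v i ≠ Letter.star) ∧ count1 v = k ∧ ∀ i, S i ≠ Letter.star → v i = S i}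

/-- The dimension of the face `F(S)`. -/
def fdim {n : ℕ} (S : FSeq n) : ℕ :=
  if countStar S = 0 then 0 else countStar S - 1

/-- `T` is a codimension-1 face of `S`. -/
def Codim1 {n : ℕ} (k : ℕ) (T S : FSeq n) : Prop :=
  VertexSet k T ⊂ VertexSet k S ∧ fdim T + 1 = fdim S

/-- A (nontrivial) `V`-path `a₀, b₀, a₁, b₁, …, b_r, a_{r+1}` of face sequences. -/
structure VPath (n k m0 m1 r : ℕ) where
  a : Fin (r + 2) → FSeq n
  b : Fin (r + 1) → FSeq n
  face_a : ∀ i, FaceSeq k (a i)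
  face_b : ∀ i, FaceSeq k (b i)
  mem : ∀ i : Fin (r + 1), Vmatch k m0 m1 (a i.castSucc) (b i)
  codim_left : ∀ i : Fin (r + 1), Codim1 k (a i.castSucc) (b i)
  codim_right : ∀ i : Fin (r + 1), Codim1 k (a i.succ) (b i)
  step_ne : ∀ i : Fin (r + 1), a i.castSucc ≠ a i.succ

/-- Alternative (i) in Statement 14: `S'` is of type 1, 2 or 8 and has a `0` at the
position of the rightmost `∗` of `S`. -/
def Out14i {n : ℕ} (k m0 m1 : ℕ) (S S' : FSeq n) : Prop :=
  (Type1 k m0 m1 S' ∨ Type2 k m0 m1 S' ∨ Type8 m0 m1 S') ∧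
    ∃ i, IsRightmostStar S i ∧ S' i = Letter.zero

/-- Alternative (ii) in Statement 14: `S'` is of type 2, 3, 4, 8 or 10 and the rightmost
`∗` of `S'` is at the same position as the rightmost `∗` of `S`. -/
def Out14ii {n : ℕ} (k m0 m1 : ℕ) (S S' : FSeq n) : Prop :=
  (Type2 k m0 m1 S' ∨ Type3 k S' ∨ Type4 k S' ∨ Type8 m0 m1 S' ∨ Type10 k S') ∧
    ∃ i, IsRightmostStar S i ∧ IsRightmostStar S' i

/-- Alternative (iii) in Statement 14: `S'` is of type 6 and has a `1` at the position of
the rightmost `∗` of `S`. -/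
def Out14iii {n : ℕ} (k m0 m1 : ℕ) (S S' : FSeq n) : Prop :=
  Type6 m0 m1 S' ∧ ∃ i, IsRightmostStar S i ∧ S' i = Letter.one


/-! The face `b₀` matched with the type-7 sequence `S` is `S` with its leftmost `0` turned into
`∗`, and a codimension-1 face `S′` of `b₀` fixes exactly one `∗` of `b₀` at some position `p` to a
letter `v ∈ {0, 1}`. Fixing the former leftmost `0` back to `0` gives `S` again, which a `V`-path
forbids; in every other case the counts of `S′` and where its first and last `∗` sit read off its
type, and the position `s` of the rightmost `∗` of `S` decides the alternative: (i) when `p = s`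
and `v = 0`, (iii) when `p = s` and `v = 1`, (ii) otherwise. The letter of `S′` at `s` is `0`, `∗`
or `1` accordingly, so no two alternatives hold at once. -/

open Function Finset

section Counting

theorem card_filter_update_add_ite {α β : Type*} [Fintype α] [DecidableEq α] [DecidableEq β]
    (f : α → β) (a : α) (b c : β) :
    #{x | update f a b x = c} + (if f a = c then 1 else 0) =
      #{x | f x = c} + if b = c then 1 else 0 := by
  rw [card_filter, card_filter, ← add_sum_erase _ _ (mem_univ a),
    ← add_sum_erase _ _ (mem_univ a), update_self,
    sum_congr rfl fun x hx => by rw [update_of_ne (ne_of_mem_erase hx)]]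
  omega

variable {n : ℕ} {S : FSeq n} {z p : Fin n}

theorem countStar_update_star (hz : S z ≠ .star) :
    countStar (update S z .star) = countStar S + 1 := by
  simpa [countStar, hz] using card_filter_update_add_ite S z .star .star

theorem count1_update_update (hz : S z = .zero) (hp : update S z .star p = .star) (v : Letter) :
    count1 (update (update S z .star) p v) = count1 S + if v = .one then 1 else 0 := by
  have h₁ := card_filter_update_add_ite S z .star .one
  have h₂ := card_filter_update_add_ite (update S z .star) p v .one
  simp only [hz, hp, reduceCtorEq, if_false, add_zero] at h₁ h₂
  unfold count1
  omega

theorem count0_update_update (hz : S z = .zero) (hp : update S z .star p = .star) (v : Letter) :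
    count0 (update (update S z .star) p v) + 1 = count0 S + if v = .zero then 1 else 0 := by
  have h₁ := card_filter_update_add_ite S z .star .zero
  have h₂ := card_filter_update_add_ite (update S z .star) p v .zero
  simp only [hz, hp, reduceCtorEq, if_false, if_true, add_zero] at h₁ h₂
  unfold count0
  omega

theorem FaceSeq.two_le_countStar {k : ℕ} (hS : FaceSeq k S) (h : hasStar S) :
    2 ≤ countStar S := by
  have : countStar S ≠ 0 := by
    obtain ⟨i, hi⟩ := h
    exact card_ne_zero_of_mem (s := {j | S j = .star}) (by simpa using hi)
  rcases hS with h | h <;> omega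

end Counting

section Positions

variable {n : ℕ} {S : FSeq n} {i j s z : Fin n}

theorem exists_isRightmostStar (h : hasStar S) : ∃ s, IsRightmostStar S s := by
  obtain ⟨s, hs, hmax⟩ := exists_max_image {j | S j = .star} id
    (let ⟨i, hi⟩ := h; ⟨i, by simpa using hi⟩)
  exact ⟨s, by simpa using hs, fun j hj hSj => (hmax j (by simpa using hSj)).not_gt hj⟩

theorem IsRightmostStar.unique (hi : IsRightmostStar S i) (hj : IsRightmostStar S j) : i = j :=
  le_antisymm (not_lt.1 fun h => hj.2 i h hi.1) (not_lt.1 fun h => hi.2 j h hj.1)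

theorem IsRightmostStar.le_of_eq_star (hs : IsRightmostStar S s) (hj : S j = .star) : j ≤ s :=
  not_lt.1 fun h => hs.2 j h hj

theorem IsRightmostStar.lt_of_eq_one (hs : IsRightmostStar S s) (hN : NoOneRight S)
    (hi : S i = .one) : i < s := by
  obtain ⟨j, hij, hj⟩ := hN.2 i hi
  exact hij.trans_le (hs.le_of_eq_star hj)

theorem IsLeftmostZero.lt_of_eq_zero (hz : IsLeftmostZero S z) (hi : S i = .zero) (hiz : i ≠ z) :
    z < i :=
  (not_lt.1 fun h => hz.2 i h hi).lt_of_ne' hiz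

theorem IsLeftmostZero.lt_of_eq_star (hz : IsLeftmostZero S z) (hZ : ZeroLeft S)
    (hj : S j = .star) : z < j := by
  obtain ⟨-, i, hi, hleft⟩ := hZ
  have hij : i < j := lt_of_le_of_ne (not_lt.1 fun h => hleft j h hj) (by rintro rfl; simp_all)
  exact (not_lt.1 fun h => hz.2 i h hi).trans_lt hij

theorem NoOneRight.not_oneRight (hN : NoOneRight S) : ¬ OneRight S := by
  rintro ⟨-, i, hi, hright⟩
  obtain ⟨j, hij, hj⟩ := hN.2 i hi
  exact hright j hij hj

theorem oneRight_or_noOneRight (h : hasStar S) : OneRight S ∨ NoOneRight S := by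
  by_cases hN : ∀ i, S i = .one → ∃ j, i < j ∧ S j = .star
  · exact .inr ⟨h, hN⟩
  · push Not at hN
    obtain ⟨i, hi, hright⟩ := hN
    exact .inl ⟨h, i, hi, hright⟩

theorem zeroLeft_or_noZeroLeft (h : hasStar S) : ZeroLeft S ∨ NoZeroLeft S := by
  by_cases hN : ∀ i, S i = .zero → ∃ j, j < i ∧ S j = .star
  · exact .inr ⟨h, hN⟩
  · push Not at hN
    obtain ⟨i, hi, hleft⟩ := hN
    exact .inl ⟨h, i, hi, hleft⟩

end Positions

section Types

variable {n k m0 m1 : ℕ} {S T b : FSeq n}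

theorem type2_or_type3_or_type4 (hm1 : m1 < k) (hm0 : m0 + k + 1 ≤ n) (h1 : count1 T = m1)
    (h0 : count0 T < m0) (hN : NoOneRight T) : Type2 k m0 m1 T ∨ Type3 k T ∨ Type4 k T := by
  by_cases hk : m1 + 2 ≤ k
  · exact .inl (.inl ⟨by omega, hN, by omega⟩)
  · rcases zeroLeft_or_noZeroLeft hN.1 with hZ | hZ
    · exact .inr (.inl ⟨by omega, by omega, hN, hZ⟩)
    · exact .inr (.inr ⟨by omega, by omega, hN, hZ⟩)

theorem type2_or_type8 (hm1 : m1 < k) (h1 : count1 T + 1 = m1) (h0 : count0 T ≤ m0)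
    (hN : NoOneRight T) (hZ : NoZeroLeft T) : Type2 k m0 m1 T ∨ Type8 m0 m1 T := by
  rcases h0.lt_or_eq with h0 | h0
  · exact .inr ⟨h1, h0, hN, hZ⟩
  · exact .inl (.inr (.inr ⟨by omega, hN, h1, h0, hZ⟩))

theorem Vmatch.apply3_of_type7 (h : Vmatch k m0 m1 S b) (h7 : Type7 m0 m1 S) (hm1 : m1 < k) :
    Apply3 S b := by
  obtain ⟨hc1, -, hN, -⟩ := h7
  rcases h.2 with ⟨h1 | h1 | h1, -⟩ | ⟨h3, -⟩ | ⟨h5, -⟩ | ⟨-, happ⟩ | ⟨h9, -⟩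
  iterate 3 exact absurd h1.2.1 hN.not_oneRight
  · have := h3.1
    omega
  · exact absurd h5.2.2.1 hN.not_oneRight
  · exact happ
  · have := h9.1
    omega

end Types

section Faces

variable {n k : ℕ} {T b : FSeq n}

def fillStars (T : FSeq n) (A : Finset (Fin n)) : FSeq n :=
  fun j => if T j = .star then if j ∈ A then .one else .zero else T j

theorem fillStars_mem_vertexSet {A : Finset (Fin n)} (hA : ∀ i ∈ A, T i = .star)
    (hcard : count1 T + #A = k) : fillStars T A ∈ VertexSet k T := by
  refine ⟨fun i => ?_, ?_, fun i hi => by simp [fillStars, hi]⟩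
  · unfold fillStars
    split_ifs <;> simp_all
  · have hones : univ.filter (fillStars T A · = .one) = univ.filter (T · = .one) ∪ A := by
      ext j
      simp only [mem_filter, mem_univ, true_and, mem_union]
      by_cases hj : T j = .star
      · by_cases hjA : j ∈ A <;> simp [fillStars, hj, hjA]
      · have hjA : j ∉ A := fun h => hj (hA j h)
        simp [fillStars, hj, hjA]
    have hdisj : Disjoint (univ.filter (T · = .one)) A :=
      disjoint_left.2 fun j hj hjA => by simp [hA j hjA] at hj
    rw [count1, hones, card_union_of_disjoint hdisj]
    exact hcard

theorem exists_mem_vertexSet_apply_eq (h1 : count1 T < k) (h2 : k < count1 T + countStar T)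
    {i : Fin n} (hi : T i = .star) {c : Letter} (hc : c ≠ .star) :
    ∃ w ∈ VertexSet k T, w i = c := by
  set stars : Finset (Fin n) := {j | T j = .star}
  have hi_mem : i ∈ stars := by simpa [stars] using hi
  have hcard : #(stars.erase i) = countStar T - 1 := card_erase_of_mem hi_mem
  have hstar : ∀ A ⊆ stars.erase i, ∀ j ∈ A, T j = .star := fun A hA j hj => by
    simpa [stars] using mem_of_mem_erase (hA hj)
  cases c with
  | zero =>
    obtain ⟨A, hA, hAcard⟩ := exists_subset_card_eq (s := stars.erase i) (n := k - count1 T)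
      (by omega)
    have hiA : i ∉ A := fun h => notMem_erase i stars (hA h)
    exact ⟨_, fillStars_mem_vertexSet (hstar A hA) (by omega), by simp [fillStars, hi, hiA]⟩
  | one =>
    obtain ⟨A, hA, hAcard⟩ := exists_subset_card_eq (s := stars.erase i) (n := k - count1 T - 1)
      (by omega)
    have hiA : i ∉ A := fun h => notMem_erase i stars (hA h)
    refine ⟨fillStars T (insert i A), fillStars_mem_vertexSet ?_ ?_, by simp [fillStars, hi]⟩
    · simpa [hi] using hstar A hA
    · rw [card_insert_of_notMem hiA]
      omega
  | star => exact absurd rfl hc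

theorem eq_of_vertexSet_subset (h1 : count1 T < k) (h2 : k < count1 T + countStar T)
    (hsub : VertexSet k T ⊆ VertexSet k b) {i : Fin n} (hi : b i ≠ .star) : T i = b i := by
  by_cases hTi : T i = .star
  · obtain ⟨w₀, hw₀, h₀⟩ := exists_mem_vertexSet_apply_eq h1 h2 hTi (c := .zero) nofun
    obtain ⟨w₁, hw₁, h₁⟩ := exists_mem_vertexSet_apply_eq h1 h2 hTi (c := .one) nofun
    have h01 := ((hsub hw₀).2.2 i hi).trans ((hsub hw₁).2.2 i hi).symm
    simp [h₀, h₁] at h01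
  · obtain ⟨j, hj⟩ : ∃ j, T j = .star := by
      obtain ⟨j, hj⟩ := card_pos.1 (show 0 < countStar T by omega)
      exact ⟨j, by simpa using hj⟩
    obtain ⟨w, hw, -⟩ := exists_mem_vertexSet_apply_eq h1 h2 hj (c := .zero) nofun
    rw [← hw.2.2 i hTi, (hsub hw).2.2 i hi]

-- `fdim` gives a vertex and a one-star sequence the same dimension 0, so for `countStar b = 2`
-- the face `T` could be a vertex.
theorem Codim1.exists_eq_update (h : Codim1 k T b) (hT : FaceSeq k T) (hb : 3 ≤ countStar b) :
    ∃ p v, b p = .star ∧ v ≠ .star ∧ T = update b p v := by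
  have hcount : countStar T + 1 = countStar b := by
    have := h.2
    unfold fdim at this
    split_ifs at this <;> omega
  obtain ⟨h1, h2⟩ : count1 T + 1 ≤ k ∧ k + 1 ≤ count1 T + countStar T :=
    hT.resolve_left fun h => by omega
  have hagree {i : Fin n} (hi : b i ≠ .star) : T i = b i :=
    eq_of_vertexSet_subset h1 h2 h.1.subset hi
  set Tstars : Finset (Fin n) := {j | T j = .star}
  set bstars : Finset (Fin n) := {j | b j = .star}
  have hsub : Tstars ⊆ bstars := fun j => by
    simp only [Tstars, bstars, mem_filter, mem_univ, true_and]
    exact fun hj => by_contra fun hbj => hbj (hagree hbj ▸ hj)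
  obtain ⟨p, hp⟩ : ∃ p, bstars \ Tstars = {p} := card_eq_one.1 <| by
    rw [card_sdiff_of_subset hsub]
    change countStar b - countStar T = 1
    omega
  have hp_mem : p ∈ bstars \ Tstars := hp ▸ mem_singleton_self p
  simp only [Tstars, bstars, mem_sdiff, mem_filter, mem_univ, true_and] at hp_mem
  refine ⟨p, T p, hp_mem.1, hp_mem.2, funext fun j => ?_⟩
  by_cases hjp : j = p
  · simp [hjp]
  rw [update_of_ne hjp]
  by_cases hbj : b j = .star
  · have hj : j ∉ bstars \ Tstars := by simp [hp, hjp]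
    simp only [Tstars, bstars, mem_sdiff, mem_filter, mem_univ, true_and, not_and, not_not] at hj
    rw [hj hbj, hbj]
  · exact hagree hbj

end Faces

section Type7

variable {n k m0 m1 : ℕ} {S : FSeq n} {z s p : Fin n} {v : Letter}

theorem isRightmostStar_update_update (hs : IsRightmostStar S s) (hzs : z < s) (hps : p ≠ s)
    (hv : v ≠ .star) : IsRightmostStar (update (update S z .star) p v) s := by
  refine ⟨by rw [update_of_ne hps.symm, update_of_ne hzs.ne', hs.1], fun j hj => ?_⟩
  rw [update_apply, update_of_ne (hzs.trans hj).ne']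
  split_ifs
  exacts [hv, hs.2 j hj]

theorem noOneRight_update_update (hN : NoOneRight S) (hs : IsRightmostStar S s) (hzs : z < s)
    (hps : p < s) (hv : v ≠ .star) : NoOneRight (update (update S z .star) p v) := by
  have hT := isRightmostStar_update_update hs hzs hps.ne hv
  refine ⟨⟨s, hT.1⟩, fun i hi => ⟨s, ?_, hT.1⟩⟩
  by_cases hip : i = p
  · exact hip ▸ hps
  rw [update_of_ne hip, update_apply] at hi
  split_ifs at hi
  exact hs.lt_of_eq_one hN hi

theorem noZeroLeft_update_update (hZ : ZeroLeft S) (hz : IsLeftmostZero S z) (hpz : p ≠ z)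
    (hp : S p = .star) (v : Letter) : NoZeroLeft (update (update S z .star) p v) := by
  have hTz : update (update S z .star) p v z = .star := by rw [update_of_ne hpz.symm, update_self]
  refine ⟨⟨z, hTz⟩, fun i hi => ⟨z, ?_, hTz⟩⟩
  have hiz : i ≠ z := by
    rintro rfl
    simp [hTz] at hi
  by_cases hip : i = p
  · exact hip ▸ hz.lt_of_eq_star hZ hp
  · rw [update_of_ne hip, update_of_ne hiz] at hi
    exact hz.lt_of_eq_zero hi hiz

theorem out14i_of_type7 (hm1 : m1 < k) (h7 : Type7 m0 m1 S) (hz : IsLeftmostZero S z)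
    (hs : IsRightmostStar S s) : Out14i k m0 m1 S (update (update S z .star) s .zero) := by
  obtain ⟨hc1, hc0, -, hZ⟩ := h7
  have hzs : z < s := hz.lt_of_eq_star hZ hs.1
  have hbs : update S z .star s = .star := by rw [update_of_ne hzs.ne', hs.1]
  have hc1' := count1_update_update hz.1 hbs .zero
  have hc0' := count0_update_update hz.1 hbs .zero
  simp only [reduceCtorEq, if_true, if_false, add_zero] at hc1' hc0'
  have hNZ := noZeroLeft_update_update hZ hz hzs.ne' hs.1 .zero
  refine ⟨?_, s, hs, update_self ..⟩
  rcases oneRight_or_noOneRight hNZ.1 with hO | hN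
  · exact .inl (.inl ⟨by omega, hO, by omega⟩)
  · exact .inr (type2_or_type8 hm1 (by omega) (by omega) hN hNZ)

theorem out14ii_of_type7_of_eq_zero (hm1 : m1 < k) (h7 : Type7 m0 m1 S) (hz : IsLeftmostZero S z)
    (hs : IsRightmostStar S s) (hpz : p ≠ z) (hps : p ≠ s) (hp : S p = .star) :
    Out14ii k m0 m1 S (update (update S z .star) p .zero) := by
  obtain ⟨hc1, hc0, hN, hZ⟩ := h7
  have hzs : z < s := hz.lt_of_eq_star hZ hs.1
  have hbp : update S z .star p = .star := by rw [update_of_ne hpz, hp]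
  have hc1' := count1_update_update hz.1 hbp .zero
  have hc0' := count0_update_update hz.1 hbp .zero
  simp only [reduceCtorEq, if_true, if_false, add_zero] at hc1' hc0'
  have hN' := noOneRight_update_update (v := .zero) hN hs hzs ((hs.le_of_eq_star hp).lt_of_ne hps)
    nofun
  have hNZ := noZeroLeft_update_update hZ hz hpz hp .zero
  have h28 := type2_or_type8 (k := k) (m0 := m0) hm1 (by omega) (by omega) hN' hNZ
  exact ⟨by tauto, s, hs, isRightmostStar_update_update hs hzs hps nofun⟩

theorem out14ii_of_type7_of_eq_one (hm1 : m1 < k) (hm0 : m0 + k + 1 ≤ n) (h7 : Type7 m0 m1 S)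
    (hz : IsLeftmostZero S z) (hs : IsRightmostStar S s) (hp : update S z .star p = .star)
    (hps : p ≠ s) : Out14ii k m0 m1 S (update (update S z .star) p .one) := by
  obtain ⟨hc1, hc0, hN, hZ⟩ := h7
  have hzs : z < s := hz.lt_of_eq_star hZ hs.1
  have hp_lt : p < s := by
    by_cases hpz : p = z
    · exact hpz ▸ hzs
    · rw [update_of_ne hpz] at hp
      exact (hs.le_of_eq_star hp).lt_of_ne hps
  have hc1' := count1_update_update hz.1 hp .one
  have hc0' := count0_update_update hz.1 hp .one
  simp only [reduceCtorEq, if_true, if_false, add_zero] at hc1' hc0'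
  have hN' := noOneRight_update_update (v := .one) hN hs hzs hp_lt nofun
  have h234 := type2_or_type3_or_type4 hm1 hm0 (by omega) (by omega) hN'
  exact ⟨by tauto, s, hs, isRightmostStar_update_update hs hzs hps nofun⟩

theorem out14iii_of_type7 (h7 : Type7 m0 m1 S) (hz : IsLeftmostZero S z)
    (hs : IsRightmostStar S s) : Out14iii k m0 m1 S (update (update S z .star) s .one) := by
  obtain ⟨hc1, hc0, -, hZ⟩ := h7
  have hzs : z < s := hz.lt_of_eq_star hZ hs.1
  have hbs : update S z .star s = .star := by rw [update_of_ne hzs.ne', hs.1]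
  have hc1' := count1_update_update hz.1 hbs .one
  have hc0' := count0_update_update hz.1 hbs .one
  simp only [reduceCtorEq, if_true, if_false, add_zero] at hc1' hc0'
  have hNZ := noZeroLeft_update_update hZ hz hzs.ne' hs.1 .one
  have hO : OneRight (update (update S z .star) s .one) := by
    refine ⟨hNZ.1, s, update_self .., fun j hj => ?_⟩
    rw [update_of_ne hj.ne', update_of_ne (hzs.trans hj).ne']
    exact hs.2 j hj
  exact ⟨⟨by omega, by omega, hO, hNZ⟩, s, hs, update_self ..⟩

end Type7

section Alternatives

variable {n k m0 m1 : ℕ} {S T : FSeq n} {s : Fin n}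

theorem Out14i.apply_eq_zero (h : Out14i k m0 m1 S T) (hs : IsRightmostStar S s) :
    T s = .zero := by
  obtain ⟨-, i, hi, hTi⟩ := h
  exact hi.unique hs ▸ hTi

theorem Out14ii.apply_eq_star (h : Out14ii k m0 m1 S T) (hs : IsRightmostStar S s) :
    T s = .star := by
  obtain ⟨-, i, hi, hTi⟩ := h
  exact hi.unique hs ▸ hTi.1

theorem Out14iii.apply_eq_one (h : Out14iii k m0 m1 S T) (hs : IsRightmostStar S s) :
    T s = .one := by
  obtain ⟨-, i, hi, hTi⟩ := h
  exact hi.unique hs ▸ hTi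

theorem out14_exactly_one (hs : IsRightmostStar S s)
    (h : Out14i k m0 m1 S T ∨ Out14ii k m0 m1 S T ∨ Out14iii k m0 m1 S T) :
    (Out14i k m0 m1 S T ∧ ¬ Out14ii k m0 m1 S T ∧ ¬ Out14iii k m0 m1 S T) ∨
    (¬ Out14i k m0 m1 S T ∧ Out14ii k m0 m1 S T ∧ ¬ Out14iii k m0 m1 S T) ∨
    (¬ Out14i k m0 m1 S T ∧ ¬ Out14ii k m0 m1 S T ∧ Out14iii k m0 m1 S T) := by
  have h₁ := fun h : Out14i k m0 m1 S T => h.apply_eq_zero hs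
  have h₂ := fun h : Out14ii k m0 m1 S T => h.apply_eq_star hs
  have h₃ := fun h : Out14iii k m0 m1 S T => h.apply_eq_one hs
  rcases h with h | h | h <;> grind

theorem out14_of_type7 {z p : Fin n} {v : Letter} (hm1 : m1 < k) (hm0 : m0 + k + 1 ≤ n)
    (h7 : Type7 m0 m1 S) (hz : IsLeftmostZero S z) (hs : IsRightmostStar S s)
    (hp : update S z .star p = .star) (hv : v ≠ .star) (hne : S ≠ update (update S z .star) p v) :
    Out14i k m0 m1 S (update (update S z .star) p v) ∨
      Out14ii k m0 m1 S (update (update S z .star) p v) ∨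
      Out14iii k m0 m1 S (update (update S z .star) p v) := by
  cases v with
  | zero =>
    by_cases hpz : p = z
    · subst hpz
      simp [update_idem, ← hz.1] at hne
    rw [update_of_ne hpz] at hp
    by_cases hps : p = s
    · exact .inl (hps ▸ out14i_of_type7 hm1 h7 hz hs)
    · exact .inr (.inl (out14ii_of_type7_of_eq_zero hm1 h7 hz hs hpz hps hp))
  | one =>
    by_cases hps : p = s
    · exact .inr (.inr (hps ▸ out14iii_of_type7 h7 hz hs))
    · exact .inr (.inl (out14ii_of_type7_of_eq_one hm1 hm0 h7 hz hs hp hps))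
  | star => exact absurd rfl hv

end Alternatives

theorem vpath_from_type7_general (n k m0 m1 : ℕ)
    (hm0 : m0 + k + 1 ≤ n) (hm1u : m1 + 1 ≤ k)
    (P : VPath n k m0 m1 0) (h0 : Type7 m0 m1 (P.a 0)) :
    (Out14i k m0 m1 (P.a 0) (P.a 1) ∧ ¬ Out14ii k m0 m1 (P.a 0) (P.a 1) ∧
        ¬ Out14iii k m0 m1 (P.a 0) (P.a 1)) ∨
    (¬ Out14i k m0 m1 (P.a 0) (P.a 1) ∧ Out14ii k m0 m1 (P.a 0) (P.a 1) ∧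
        ¬ Out14iii k m0 m1 (P.a 0) (P.a 1)) ∨
    (¬ Out14i k m0 m1 (P.a 0) (P.a 1) ∧ ¬ Out14ii k m0 m1 (P.a 0) (P.a 1) ∧
        Out14iii k m0 m1 (P.a 0) (P.a 1)) := by
  have hV : Vmatch k m0 m1 (P.a 0) (P.b 0) := P.mem 0
  obtain ⟨z, hz, hb⟩ := hV.apply3_of_type7 h0 hm1u
  obtain ⟨s, hs⟩ := exists_isRightmostStar h0.2.2.1.1
  have hcod : Codim1 k (P.a 1) (update (P.a 0) z .star) := hb ▸ P.codim_right 0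
  have hstars : 3 ≤ countStar (update (P.a 0) z .star) := by
    rw [countStar_update_star (by simp [hz.1])]
    have := (P.face_a 0).two_le_countStar h0.2.2.1.1
    omega
  obtain ⟨p, v, hp, hv, hT⟩ := hcod.exists_eq_update (P.face_a 1) hstars
  have hne : P.a 0 ≠ P.a 1 := P.step_ne 0
  rw [hT] at hne ⊢
  exact out14_exactly_one hs (out14_of_type7 hm1u hm0 h0 hz hs hp hv hne)

/-- In a `V`-path `a₀, b₀, a₁` with `a₀` of type 7, exactly one of the
alternatives (i), (ii), (iii) holds for `S = a₀` and `S' = a₁`. -/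
theorem vpath_from_type7 (n k m0 m1 : ℕ) (hk1 : 1 ≤ k) (hk2 : k ≤ n - 1)
    (hm0 : m0 + k + 1 ≤ n) (hm1l : 1 ≤ m1) (hm1u : m1 + 1 ≤ k)
    (P : VPath n k m0 m1 0) (h0 : Type7 m0 m1 (P.a 0)) :
    (Out14i k m0 m1 (P.a 0) (P.a 1) ∧ ¬ Out14ii k m0 m1 (P.a 0) (P.a 1) ∧
        ¬ Out14iii k m0 m1 (P.a 0) (P.a 1)) ∨
    (¬ Out14i k m0 m1 (P.a 0) (P.a 1) ∧ Out14ii k m0 m1 (P.a 0) (P.a 1) ∧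
        ¬ Out14iii k m0 m1 (P.a 0) (P.a 1)) ∨
    (¬ Out14i k m0 m1 (P.a 0) (P.a 1) ∧ ¬ Out14ii k m0 m1 (P.a 0) (P.a 1) ∧
        Out14iii k m0 m1 (P.a 0) (P.a 1)) :=
  vpath_from_type7_general n k m0 m1 hm0 hm1u P h0
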